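/- Let U = (P ∪ Q, Ẽ) be an undirected bipartite graph and let (G,σ) be the 2-colored digraph constructed from U as follows: V(G) = P ∪ Q ∪ R ∪ {b} ∪ {w} where R = {r1,…,r|Q|} is a copy of Q = {q1,…,q|Q|}; all vertices of P, all vertices of R, and b are colored black, and all vertices of Q and w are colored white; the arcs are (q_i,r_i) and (r_i,q_i) for 1 ≤ i ≤ |Q|, (p_i,w) for every p_i ∈ P, (w,b) and (b,w), and (p,q) for every edge {p,q} ∈ Ẽ. Let F ⊆ P×Q and put F̃ = {{p,q} | (p,q) ∈ F}. Then (G+F,σ) is a best match graph if and only if U' = (P ∪ Q, Ẽ ∪ F̃) is a chain graph. -/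

import Mathlib

/-!
Adding the arcs `F` to the reduction graph of `U` gives the reduction graph of `U'`, so it
suffices to show that the reduction graph of a bipartite graph is a BMG iff the graph is a chain
graph.

If a tree explains it, every `p ∈ P` has `w` as a best match, so the cluster of
`lca(p, w)` contains exactly the best matches `q` of `p`. Were the neighborhoods of `u, v ∈ P`
not nested, with witnesses `q` and `q'`, the clusters `lca(u, w)` and `lca(v, w)` would share
`w`, hence be nested; if, say, `lca(u, w) ⊆ lca(v, w)`, then `q ∈ lca(v, q')` would be a best
match of `v`. Ordering `P` by neighborhood size then gives a chain graph.

Conversely, for a chain graph take the tree whose inner clusters are `{q, r_q}`, `{b, w}` and,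
for every `p`, `{p' | p' ≤ p} ∪ N(p) ∪ R(N(p)) ∪ {b, w}`. The parent cluster of every leaf
contains a vertex of the other color, so the best matches of a leaf are exactly the vertices of
the other color in its parent cluster, and these are its out-neighbors.
-/

/-- A rooted (phylogenetic) tree on leaf set `V`, encoded by its hierarchy of
clusters `L(T(v))`, `v ∈ V(T)`: a rooted tree on leaf set `V` corresponds
exactly to a family of nonempty, pairwise compatible subsets of `V` containing
all singletons and `V` itself.  Together with a coloring `σ : V → M` this is a
leaf-colored tree. -/
structure PhyloTree (V : Type) where
  clusters : Set (Set V)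
  compat : ∀ p ∈ clusters, ∀ q ∈ clusters, p ⊆ q ∨ q ⊆ p ∨ p ∩ q = ∅
  singleton_mem : ∀ v : V, {v} ∈ clusters
  univ_mem : Set.univ ∈ clusters
  nonempty_mem : ∀ p ∈ clusters, p.Nonempty

namespace PhyloTree

variable {V M : Type}

/-- The cluster `L(T(lca(x,y)))` of the last common ancestor of `x` and `y`;
for inner vertices `u,v` of a tree one has `u ⪯_T v ↔ L(T(u)) ⊆ L(T(v))`. -/
def lcaSet (T : PhyloTree V) (x y : V) : Set V :=
  ⋂₀ {p : Set V | p ∈ T.clusters ∧ x ∈ p ∧ y ∈ p}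

/-- `T` displays the triple `xy|z`, i.e. `lca(x,y) ≺ lca(x,z) = lca(y,z)`. -/
def Displays (T : PhyloTree V) (x y z : V) : Prop :=
  T.lcaSet x y ⊂ T.lcaSet x z ∧ T.lcaSet x z = T.lcaSet y z

/-- `y` is a best match of `x` in the leaf-colored tree `(T,σ)`. -/
def BestMatch (T : PhyloTree V) (σ : V → M) (x y : V) : Prop :=
  σ x ≠ σ y ∧ ∀ y' : V, σ y' = σ y → T.lcaSet x y ⊆ T.lcaSet x y'

end PhyloTree

variable {V M : Type}

/-- `(T,σ)` explains `(G,σ)`, i.e. `(G,σ) = G(T,σ)`. -/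
def Explains (T : PhyloTree V) (σ : V → M) (G : V → V → Prop) : Prop :=
  ∀ x y : V, G x y ↔ T.BestMatch σ x y

/-- `(G,σ)` is a best match graph. -/
def IsBMG (G : V → V → Prop) (σ : V → M) : Prop :=
  ∃ T : PhyloTree V, Explains T σ G

/-- The triple `xy|y'` is informative for `(G,σ)`. -/
def InformativeTriple (G : V → V → Prop) (σ : V → M) (x y y' : V) : Prop :=
  x ≠ y ∧ x ≠ y' ∧ y ≠ y' ∧ σ x ≠ σ y ∧ σ y = σ y' ∧ G x y ∧ ¬ G x y'

/-- The triple `xy|y'` is forbidden for `(G,σ)`. -/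
def ForbiddenTriple (G : V → V → Prop) (σ : V → M) (x y y' : V) : Prop :=
  x ≠ y ∧ x ≠ y' ∧ y ≠ y' ∧ σ x ≠ σ y ∧ σ y = σ y' ∧ G x y ∧ G x y'

/-- `(G,σ)` is sf-colored: `σ` is proper and every vertex has an out-neighbor
of every color present in the graph other than its own. -/
def SfColored (G : V → V → Prop) (σ : V → M) : Prop :=
  (∀ x y : V, G x y → σ x ≠ σ y) ∧
  ∀ (x : V) (s : M), (∃ v : V, σ v = s) → s ≠ σ x → ∃ y : V, σ y = s ∧ G x y

/-- Vertex set of the graph constructed in the reduction from Chain Graph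
Completion: `P ∪ Q ∪ R ∪ {b} ∪ {w}`, where `R` is a copy of `Q`, the vertex
`b = Sum.inr (Sum.inr (Sum.inr true))` and `w = Sum.inr (Sum.inr (Sum.inr false))`. -/
abbrev CGCVert (P Q : Type) : Type := P ⊕ Q ⊕ Q ⊕ Bool

/-- The coloring: vertices of `P`, of `R` and `b` are black (`true`); vertices
of `Q` and `w` are white (`false`). -/
def cgcColor {P Q : Type} : CGCVert P Q → Bool
  | Sum.inl _ => true
  | Sum.inr (Sum.inl _) => false
  | Sum.inr (Sum.inr (Sum.inl _)) => true
  | Sum.inr (Sum.inr (Sum.inr c)) => c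

/-- Arcs of the reduction graph constructed from the bipartite graph with edge
relation `E0` between `P` and `Q`: `(q_i,r_i)`, `(r_i,q_i)`, `(p,w)` for every
`p ∈ P`, `(w,b)`, `(b,w)`, and `(p,q)` for every edge `{p,q}` of `U`. -/
def cgcArcs {P Q : Type} (E0 : P → Q → Prop) : CGCVert P Q → CGCVert P Q → Prop
  | Sum.inl p, Sum.inr (Sum.inl q) => E0 p q
  | Sum.inl _, Sum.inr (Sum.inr (Sum.inr c)) => c = false
  | Sum.inr (Sum.inl q), Sum.inr (Sum.inr (Sum.inl q')) => q = q'
  | Sum.inr (Sum.inr (Sum.inl q')), Sum.inr (Sum.inl q) => q' = q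
  | Sum.inr (Sum.inr (Sum.inr c)), Sum.inr (Sum.inr (Sum.inr c')) => c ≠ c'
  | _, _ => False

/-- The bipartite graph on `P ∪ Q` with edge relation `E0` is a chain graph:
there is a linear order on `P` along which the neighborhoods are nested. -/
def IsChainGraph {P Q : Type} (E0 : P → Q → Prop) : Prop :=
  ∃ l : LinearOrder P, ∀ u v : P, l.le u v → ∀ q : Q, E0 u q → E0 v q

namespace PhyloTree

def Compatible (s t : Set V) : Prop := s ⊆ t ∨ t ⊆ s ∨ s ∩ t = ∅

theorem Compatible.refl (s : Set V) : Compatible s s := Or.inl subset_rfl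

theorem Compatible.symm {s t : Set V} (h : Compatible s t) : Compatible t s := by
  rcases h with h | h | h
  exacts [Or.inr (Or.inl h), Or.inl h, Or.inr (Or.inr (Set.inter_comm s t ▸ h))]

theorem Compatible.subset_or_subset {s t : Set V} (h : Compatible s t) {x : V} (hs : x ∈ s)
    (ht : x ∈ t) : s ⊆ t ∨ t ⊆ s := by
  rcases h with h | h | h
  exacts [Or.inl h, Or.inr h, (Set.notMem_empty x (h ▸ ⟨hs, ht⟩)).elim]

theorem compatible_univ_left (t : Set V) : Compatible Set.univ t :=
  Or.inr (Or.inl (Set.subset_univ t))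

theorem compatible_singleton_left (x : V) (t : Set V) : Compatible {x} t := by
  by_cases hx : x ∈ t
  · exact Or.inl (Set.singleton_subset_iff.2 hx)
  · exact Or.inr (Or.inr (Set.singleton_inter_eq_empty.2 hx))

variable (T : PhyloTree V)

theorem mem_lcaSet_left (x y : V) : x ∈ T.lcaSet x y :=
  Set.mem_sInter.2 fun _ hs => hs.2.1

theorem mem_lcaSet_right (x y : V) : y ∈ T.lcaSet x y :=
  Set.mem_sInter.2 fun _ hs => hs.2.2

variable {T}

theorem lcaSet_subset {c : Set V} {x y : V} (hc : c ∈ T.clusters) (hx : x ∈ c) (hy : y ∈ c) :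
    T.lcaSet x y ⊆ c :=
  Set.sInter_subset_of_mem ⟨hc, hx, hy⟩

theorem subset_lcaSet {s : Set V} {x y : V}
    (h : ∀ c ∈ T.clusters, x ∈ c → y ∈ c → s ⊆ c) : s ⊆ T.lcaSet x y :=
  Set.subset_sInter fun c hc => h c hc.1 hc.2.1 hc.2.2

/-- In a finite tree, the clusters containing `x` and `y` form a finite chain, whose least
element is their intersection. -/
theorem lcaSet_mem [Finite V] (x y : V) : T.lcaSet x y ∈ T.clusters := by
  obtain ⟨c, hc, hmin⟩ :=
    (Set.toFinite {c | c ∈ T.clusters ∧ x ∈ c ∧ y ∈ c}).exists_minimal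
      ⟨Set.univ, T.univ_mem, trivial, trivial⟩
  have hleast : c ⊆ T.lcaSet x y := subset_lcaSet fun d hd hx hy =>
    (Compatible.subset_or_subset (T.compat c hc.1 d hd) hc.2.1 hx).elim id
      fun hdc => hmin ⟨hd, hx, hy⟩ hdc
  rw [← hleast.antisymm (lcaSet_subset hc.1 hc.2.1 hc.2.2)]
  exact hc.1

theorem BestMatch.of_mem_lcaSet [Finite V] {σ : V → M} {x y z : V} (h : T.BestMatch σ x y)
    (hz : σ z = σ y) (hmem : z ∈ T.lcaSet x y) : T.BestMatch σ x z :=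
  ⟨hz ▸ h.1, fun y' hy' =>
    (lcaSet_subset (lcaSet_mem x y) (mem_lcaSet_left T x y) hmem).trans (h.2 y' (hy'.trans hz))⟩

theorem BestMatch.or_of_common [Finite V] {σ : V → M} {u v w q q' : V}
    (huw : T.BestMatch σ u w) (hvw : T.BestMatch σ v w)
    (huq : T.BestMatch σ u q) (hvq' : T.BestMatch σ v q') (hq : σ q = σ w)
    (hq' : σ q' = σ w) :
    T.BestMatch σ v q ∨ T.BestMatch σ u q' := by
  have hwu : w ∈ T.lcaSet u q := huw.2 q hq (mem_lcaSet_right T u w)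
  have hwv : w ∈ T.lcaSet v q' := hvw.2 q' hq' (mem_lcaSet_right T v w)
  rcases Compatible.subset_or_subset (T.compat _ (lcaSet_mem u q) _ (lcaSet_mem v q')) hwu hwv
    with h | h
  · exact Or.inl (hvq'.of_mem_lcaSet (hq.trans hq'.symm) (h (mem_lcaSet_right T u q)))
  · exact Or.inr (huq.of_mem_lcaSet (hq'.trans hq.symm) (h (mem_lcaSet_right T v q')))

def ofParent [Nonempty V] (par : V → Set V) (self_mem : ∀ x, x ∈ par x)
    (compatible : ∀ x y, Compatible (par x) (par y)) : PhyloTree V where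
  clusters := insert Set.univ (Set.range ({·}) ∪ Set.range par)
  compat := by
    have key : ∀ s ∈ Set.range ({·}) ∪ Set.range par,
        ∀ t ∈ Set.range ({·}) ∪ Set.range par, Compatible s t := by
      rintro s (⟨x, rfl⟩ | ⟨x, rfl⟩) t (⟨y, rfl⟩ | ⟨y, rfl⟩)
      exacts [compatible_singleton_left x _, compatible_singleton_left x _,
        (compatible_singleton_left y _).symm, compatible x y]
    rintro s (rfl | hs) t (rfl | ht)
    exacts [compatible_univ_left _, compatible_univ_left t, (compatible_univ_left s).symm,
      key s hs t ht]
  singleton_mem v := Or.inr (Or.inl ⟨v, rfl⟩)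
  univ_mem := Or.inl rfl
  nonempty_mem := by
    rintro s (rfl | ⟨x, rfl⟩ | ⟨x, rfl⟩)
    exacts [Set.univ_nonempty, Set.singleton_nonempty x, ⟨x, self_mem x⟩]

/-- `par x` plays the role of the cluster of the parent of the leaf `x`: by `parent_subset`,
every cluster containing `x` and another leaf contains `par x`. -/
theorem bestMatch_ofParent_iff [Nonempty V] {par : V → Set V} {self_mem : ∀ x, x ∈ par x}
    {compatible : ∀ x y, Compatible (par x) (par y)} {σ : V → M}
    (parent_subset : ∀ x z, x ∈ par z → par x ⊆ par z)
    (exists_color : ∀ x y, σ x ≠ σ y → ∃ z ∈ par x, σ z = σ y) {x y : V} :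
    (ofParent par self_mem compatible).BestMatch σ x y ↔ σ x ≠ σ y ∧ y ∈ par x := by
  set T := ofParent par self_mem compatible
  have par_mem : ∀ x, par x ∈ T.clusters := fun x => Or.inr (Or.inr ⟨x, rfl⟩)
  constructor
  · intro h
    obtain ⟨z, hz, hzy⟩ := exists_color x y h.1
    exact ⟨h.1, lcaSet_subset (par_mem x) (self_mem x) hz (h.2 z hzy (mem_lcaSet_right T x y))⟩
  · rintro ⟨hne, hy⟩
    refine ⟨hne, fun y' hy' => (lcaSet_subset (par_mem x) (self_mem x) hy).trans
      (subset_lcaSet ?_)⟩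
    rintro c (rfl | ⟨v, rfl⟩ | ⟨z, rfl⟩) hxc hy'c
    · exact Set.subset_univ _
    · exact absurd ((congrArg σ (hxc.trans hy'c.symm)).trans hy') hne
    · exact parent_subset x z hxc

end PhyloTree

theorem isChainGraph_of_nested {P Q : Type} [Finite P] [Finite Q] (E : P → Q → Prop)
    (nested : ∀ u v : P, (∀ q, E u q → E v q) ∨ (∀ q, E v q → E u q)) :
    IsChainGraph E := by
  let key : P → ℕ ×ₗ Fin (Nat.card P) :=
    fun p => toLex ({q | E p q}.ncard, Finite.equivFin P p)
  have key_injective : key.Injective := fun a b h =>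
    (Finite.equivFin P).injective (congrArg (fun k => (ofLex k).2) h)
  refine ⟨LinearOrder.lift' key key_injective, fun u v huv q hq => ?_⟩
  rcases nested u v with h | h
  · exact h q hq
  · have hcard : {q | E u q}.ncard ≤ {q | E v q}.ncard :=
      (Prod.Lex.le_iff.1 huv).elim le_of_lt fun h => h.1.le
    have heq : {q | E v q} = {q | E u q} := Set.eq_of_subset_of_ncard_le h hcard
    exact (Set.ext_iff.1 heq q).2 hq

namespace CGCVert

open PhyloTree

variable {P Q : Type}

def qrCluster (q : Q) : Set (CGCVert P Q) := {.inr (.inl q), .inr (.inr (.inl q))}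

def bwCluster : Set (CGCVert P Q) := Set.range fun c => .inr (.inr (.inr c))

theorem compatible_qrCluster (q q' : Q) :
    Compatible (qrCluster q : Set (CGCVert P Q)) (qrCluster q') := by
  by_cases h : q = q'
  · exact Or.inl (h ▸ subset_rfl)
  · refine Or.inr (Or.inr (Set.eq_empty_of_forall_notMem ?_))
    rintro v ⟨rfl | rfl, h' | h'⟩ <;> simp_all

theorem compatible_qrCluster_bwCluster (q : Q) :
    Compatible (qrCluster q : Set (CGCVert P Q)) bwCluster := by
  refine Or.inr (Or.inr (Set.eq_empty_of_forall_notMem ?_))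
  rintro v ⟨rfl | rfl, c, hc⟩ <;> simp at hc

variable [LinearOrder P] (E : P → Q → Prop)

def chainCluster (p : P) : Set (CGCVert P Q) := {v | match v with
  | .inl p' => p' ≤ p
  | .inr (.inl q) => E p q
  | .inr (.inr (.inl q)) => E p q
  | .inr (.inr (.inr _)) => True}

def parent : CGCVert P Q → Set (CGCVert P Q)
  | .inl p => chainCluster E p
  | .inr (.inl q) => qrCluster q
  | .inr (.inr (.inl q)) => qrCluster q
  | .inr (.inr (.inr _)) => bwCluster

variable {E}

theorem chainCluster_mono (hmono : ∀ u v : P, u ≤ v → ∀ q : Q, E u q → E v q) {p p' : P}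
    (h : p ≤ p') : chainCluster E p ⊆ chainCluster E p' := by
  rintro (p'' | q | q | c) hv
  exacts [le_trans (α := P) hv h, hmono p p' h q hv, hmono p p' h q hv, trivial]

theorem qrCluster_subset_chainCluster {p : P} {q : Q} (h : E p q) :
    qrCluster q ⊆ chainCluster E p := by
  rintro v (rfl | rfl) <;> exact h

theorem bwCluster_subset_chainCluster (p : P) : bwCluster ⊆ chainCluster E p := by
  rintro v ⟨c, rfl⟩; trivial

theorem compatible_qrCluster_chainCluster (q : Q) (p : P) :
    Compatible (qrCluster q) (chainCluster E p) := by
  by_cases h : E p q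
  · exact Or.inl (qrCluster_subset_chainCluster h)
  · refine Or.inr (Or.inr (Set.eq_empty_of_forall_notMem ?_))
    rintro v ⟨rfl | rfl, hv⟩ <;> exact h hv

theorem compatible_chainCluster (hmono : ∀ u v : P, u ≤ v → ∀ q : Q, E u q → E v q)
    (p p' : P) : Compatible (chainCluster E p) (chainCluster E p') :=
  (le_total p p').elim (fun h => Or.inl (chainCluster_mono hmono h))
    fun h => Or.inr (Or.inl (chainCluster_mono hmono h))

theorem compatible_bwCluster_chainCluster (p : P) : Compatible bwCluster (chainCluster E p) :=
  Or.inl (bwCluster_subset_chainCluster p)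

theorem compatible_parent (hmono : ∀ u v : P, u ≤ v → ∀ q : Q, E u q → E v q)
    (x y : CGCVert P Q) : Compatible (parent E x) (parent E y) := by
  rcases x with p | q | q | c <;> rcases y with p' | q' | q' | c' <;> simp only [parent]
  all_goals first
    | exact Compatible.refl _
    | exact compatible_chainCluster hmono _ _
    | exact compatible_bwCluster_chainCluster _
    | exact (compatible_bwCluster_chainCluster _).symm
    | exact compatible_qrCluster_chainCluster _ _
    | exact (compatible_qrCluster_chainCluster _ _).symm
    | exact compatible_qrCluster _ _
    | exact compatible_qrCluster_bwCluster _
    | exact (compatible_qrCluster_bwCluster _).symm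

theorem parent_eq_of_mem_qrCluster {x : CGCVert P Q} {q : Q} (h : x ∈ qrCluster q) :
    parent E x = qrCluster q := by
  rcases h with rfl | rfl <;> rfl

theorem parent_eq_of_mem_bwCluster {x : CGCVert P Q} (h : x ∈ bwCluster) :
    parent E x = bwCluster := by
  obtain ⟨c, rfl⟩ := h
  rfl

theorem parent_subset_of_mem (hmono : ∀ u v : P, u ≤ v → ∀ q : Q, E u q → E v q)
    {x z : CGCVert P Q} (h : x ∈ parent E z) : parent E x ⊆ parent E z := by
  rcases z with p | q | q | c
  · rcases x with p' | q' | q' | c'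
    exacts [chainCluster_mono hmono h, qrCluster_subset_chainCluster h,
      qrCluster_subset_chainCluster h, bwCluster_subset_chainCluster p]
  · exact (parent_eq_of_mem_qrCluster h).subset
  · exact (parent_eq_of_mem_qrCluster h).subset
  · exact (parent_eq_of_mem_bwCluster h).subset

variable (E)

theorem mem_parent_self (x : CGCVert P Q) : x ∈ parent E x := by
  rcases x with p | q | q | c <;> simp [parent, qrCluster, bwCluster, chainCluster]

theorem exists_mem_parent_color_ne (x : CGCVert P Q) :
    ∃ z ∈ parent E x, cgcColor z ≠ cgcColor x := by
  rcases x with p | q | q | c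
  exacts [⟨.inr (.inr (.inr false)), trivial, Bool.false_ne_true⟩,
    ⟨.inr (.inr (.inl q)), Or.inr rfl, Bool.false_ne_true.symm⟩,
    ⟨.inr (.inl q), Or.inl rfl, Bool.false_ne_true⟩,
    ⟨.inr (.inr (.inr !c)), ⟨!c, rfl⟩, Bool.not_ne_self c⟩]

theorem cgcArcs_iff (x y : CGCVert P Q) :
    cgcArcs E x y ↔ cgcColor x ≠ cgcColor y ∧ y ∈ parent E x := by
  rcases x with p | q | q | c <;> rcases y with p' | q' | q' | c' <;>
    simp [cgcArcs, cgcColor, parent, qrCluster, bwCluster, chainCluster, eq_comm]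

end CGCVert

section Reduction

open PhyloTree CGCVert

variable {P Q : Type}

theorem isBMG_cgcArcs_of_isChainGraph {E : P → Q → Prop} (h : IsChainGraph E) :
    IsBMG (cgcArcs E) cgcColor := by
  obtain ⟨l, hmono⟩ := h
  let := l
  refine ⟨ofParent (parent E) (mem_parent_self E) (compatible_parent hmono), fun x y => ?_⟩
  rw [bestMatch_ofParent_iff (fun _ _ => parent_subset_of_mem hmono), cgcArcs_iff]
  intro x y hxy
  obtain ⟨z, hz, hzx⟩ := exists_mem_parent_color_ne E x
  exact ⟨z, hz, (Bool.eq_not_iff.2 hzx).trans (Bool.eq_not_iff.2 hxy.symm).symm⟩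

theorem isChainGraph_of_isBMG_cgcArcs [Finite P] [Finite Q] {E : P → Q → Prop}
    (h : IsBMG (cgcArcs E) cgcColor) : IsChainGraph E := by
  obtain ⟨T, hT⟩ := h
  refine isChainGraph_of_nested E fun u v => ?_
  by_contra! ⟨⟨q, huq, hvq⟩, ⟨q', hvq', huq'⟩⟩
  let w : CGCVert P Q := .inr (.inr (.inr false))
  have arc_iff (p : P) (q : Q) := hT (.inl p) (.inr (.inl q))
  rcases ((hT (.inl u) w).1 rfl).or_of_common ((hT (.inl v) w).1 rfl) ((arc_iff u q).1 huq)
    ((arc_iff v q').1 hvq') rfl rfl with h | h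
  exacts [hvq ((arc_iff v q).2 h), huq' ((arc_iff u q').2 h)]

theorem cgcArcs_or_eq (E0 F : P → Q → Prop) :
    (fun u v => cgcArcs E0 u v ∨
      ∃ (p : P) (q : Q), F p q ∧ u = Sum.inl p ∧ v = Sum.inr (Sum.inl q)) =
    cgcArcs fun p q => E0 p q ∨ F p q := by
  ext u v
  rcases u with p | q | q | c <;> rcases v with p' | q' | q' | c' <;> simp [cgcArcs]

end Reduction

theorem cgc_reduction_bmg_iff_chain_general {P Q : Type}
    [Fintype P] [Fintype Q]
    (E0 : P → Q → Prop) (F : P → Q → Prop) :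
    IsBMG
      (fun u v => cgcArcs E0 u v ∨
        (∃ (p : P) (q : Q), F p q ∧ u = Sum.inl p ∧ v = Sum.inr (Sum.inl q)))
      cgcColor ↔
    IsChainGraph (fun p q => E0 p q ∨ F p q) := by
  rw [cgcArcs_or_eq]
  exact ⟨isChainGraph_of_isBMG_cgcArcs, isBMG_cgcArcs_of_isChainGraph⟩

/-- For `F ⊆ P×Q`, the graph `(G+F,σ)` obtained from the CGC
reduction graph is a BMG iff `U' = (P ∪ Q, Ẽ ∪ F̃)` is a chain graph. -/
theorem cgc_reduction_bmg_iff_chain {P Q : Type}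
    [Fintype P] [Fintype Q] [Nonempty P] [Nonempty Q]
    (E0 : P → Q → Prop) (F : P → Q → Prop) :
    IsBMG
      (fun u v => cgcArcs E0 u v ∨
        (∃ (p : P) (q : Q), F p q ∧ u = Sum.inl p ∧ v = Sum.inr (Sum.inl q)))
      cgcColor ↔
    IsChainGraph (fun p q => E0 p q ∨ F p q) :=
  cgc_reduction_bmg_iff_chain_general E0 F
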